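/- arXiv:2504.01198 — 11 statements merged into one kernel-verified Lean document; each statement's English description precedes it below -/
import Mathlib

section
/- For every extended term r over an alphabet Σ there exists a regular expression r' (an extended term containing no E-nodes and no δ-nodes) such that L(r') = L(r). Moreover, for every extended term r, either L(E(r)) = L(∅) or L(E(r)) = L(ε), but not both. -/
/-- Extended terms over an alphabet `α`: regular expressions extended with
`E`-nodes (`eps`) and `δ`-nodes (`deriv`). -/
inductive ExtTerm (α : Type*) : Type _
  | zero : ExtTerm α
  | epsilon : ExtTerm α
  | char : α → ExtTerm α
  | comp : ExtTerm α → ExtTerm α → ExtTerm α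
  | plus : ExtTerm α → ExtTerm α → ExtTerm α
  | star : ExtTerm α → ExtTerm α
  | eps : ExtTerm α → ExtTerm α
  | deriv : α → ExtTerm α → ExtTerm α

namespace ExtTerm

variable {α : Type*}

/-- The language of an extended term. -/
def lang : ExtTerm α → Language α
  | zero => 0
  | epsilon => 1
  | char c => {[c]}
  | comp r₁ r₂ => r₁.lang * r₂.lang
  | plus r₁ r₂ => r₁.lang + r₂.lang
  | star r => KStar.kstar r.lang
  | eps r => { s | s = [] ∧ [] ∈ r.lang }
  | deriv c r => { s | c :: s ∈ r.lang }

/-- An extended term is a regular expression if it contains no `E`-nodes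
and no `δ`-nodes. -/
def IsRegex : ExtTerm α → Prop
  | zero => True
  | epsilon => True
  | char _ => True
  | comp r₁ r₂ => r₁.IsRegex ∧ r₂.IsRegex
  | plus r₁ r₂ => r₁.IsRegex ∧ r₂.IsRegex
  | star r => r.IsRegex
  | eps _ => False
  | deriv _ _ => False

end ExtTerm


open RegularExpression in
/-- Convert a regular expression back into an extended term. -/
def ofRE {α : Type*} : RegularExpression α → ExtTerm α
  | 0 => ExtTerm.zero
  | 1 => ExtTerm.epsilon
  | RegularExpression.char c => ExtTerm.char c
  | RegularExpression.comp P Q => ExtTerm.comp (ofRE P) (ofRE Q)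
  | P + Q => ExtTerm.plus (ofRE P) (ofRE Q)
  | RegularExpression.star P => ExtTerm.star (ofRE P)

theorem ofRE_isRegex {α : Type*} (P : RegularExpression α) : (ofRE P).IsRegex := by
  induction P <;> simp [ofRE, ExtTerm.IsRegex, *]

theorem ofRE_lang {α : Type*} (P : RegularExpression α) : (ofRE P).lang = P.matches' := by
  induction P <;> simp_all [ofRE, ExtTerm.lang, RegularExpression.matches']

open scoped Classical in
/-- Convert an extended term into a regular expression. -/
noncomputable def toRE {α : Type*} : ExtTerm α → RegularExpression α
  | ExtTerm.zero => 0
  | ExtTerm.epsilon => 1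
  | ExtTerm.char c => RegularExpression.char c
  | ExtTerm.comp r₁ r₂ => RegularExpression.comp (toRE r₁) (toRE r₂)
  | ExtTerm.plus r₁ r₂ => toRE r₁ + toRE r₂
  | ExtTerm.star r => RegularExpression.star (toRE r)
  | ExtTerm.eps r => if [] ∈ r.lang then 1 else 0
  | ExtTerm.deriv c r => (toRE r).deriv c

open scoped Classical in
theorem matches'_deriv {α : Type*} (P : RegularExpression α) (c : α) :
    (P.deriv c).matches' = { s | c :: s ∈ P.matches' } := by
  ext s
  change s ∈ (P.deriv c).matches' ↔ c :: s ∈ P.matches'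
  rw [← RegularExpression.rmatch_iff_matches',
    ← RegularExpression.rmatch_iff_matches']
  rfl

open scoped Classical in
theorem toRE_lang {α : Type*} (r : ExtTerm α) : (toRE r).matches' = r.lang := by
  induction r with
  | eps r ih =>
    by_cases h : [] ∈ r.lang <;>
        simp [toRE, h, ExtTerm.lang, RegularExpression.matches'] <;> ext s
    · exact ⟨fun hs => hs, fun hs => hs⟩
    · exact Iff.rfl
  | deriv c r ih => rw [toRE, matches'_deriv, ih]; rfl
  | _ => simp_all [toRE, ExtTerm.lang, RegularExpression.matches']

theorem term_conversion {α : Type*} (r : ExtTerm α) :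
    (∃ r' : ExtTerm α, r'.IsRegex ∧ r'.lang = r.lang) ∧
      Xor' ((ExtTerm.eps r).lang = (ExtTerm.zero : ExtTerm α).lang)
        ((ExtTerm.eps r).lang = (ExtTerm.epsilon : ExtTerm α).lang) := by
  constructor
  · exact ⟨ofRE (toRE r), ofRE_isRegex _, by rw [ofRE_lang, toRE_lang]⟩
  · by_cases h : [] ∈ r.lang
    · right
      constructor
      · ext s; simp [ExtTerm.lang, h, Language.mem_one]; exact ⟨fun hs => hs, fun hs => hs⟩
      · intro hz
        have : [] ∈ (ExtTerm.eps r).lang := ⟨rfl, h⟩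
        rw [hz] at this
        exact this
    · left
      constructor
      · ext s; simp [ExtTerm.lang, h]; exact fun hs => hs
      · intro hz
        have : [] ∈ (ExtTerm.eps r).lang := by rw [hz]; exact Language.nil_mem_one
        exact h this.2
end

section
/- For any linear order R on regular expressions over an alphabet Σ, every regular expression r is similar to some regular expression in normal form with respect to R. -/
open RegularExpression

variable {α : Type*}

/-- Similarity: the smallest congruence on regular expressions containing the
listed Kleene-algebra axioms. -/
inductive RESimilar : RegularExpression α → RegularExpression α → Prop
  | refl (p : RegularExpression α) : RESimilar p p
  | symm {p q : RegularExpression α} : RESimilar p q → RESimilar q p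
  | trans {p q r : RegularExpression α} : RESimilar p q → RESimilar q r → RESimilar p r
  | plus_congr {p p' q q' : RegularExpression α} :
      RESimilar p p' → RESimilar q q' → RESimilar (p.plus q) (p'.plus q')
  | comp_congr {p p' q q' : RegularExpression α} :
      RESimilar p p' → RESimilar q q' → RESimilar (p.comp q) (p'.comp q')
  | star_congr {p p' : RegularExpression α} : RESimilar p p' → RESimilar p.star p'.star
  | plus_assoc (p q r : RegularExpression α) : RESimilar (p.plus (q.plus r)) ((p.plus q).plus r)
  | plus_comm (p q : RegularExpression α) : RESimilar (p.plus q) (q.plus p)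
  | plus_zero (p : RegularExpression α) : RESimilar (p.plus RegularExpression.zero) p
  | plus_self (p : RegularExpression α) : RESimilar (p.plus p) p
  | comp_assoc (p q r : RegularExpression α) : RESimilar (p.comp (q.comp r)) ((p.comp q).comp r)
  | eps_comp (p : RegularExpression α) : RESimilar (RegularExpression.epsilon.comp p) p
  | comp_eps (p : RegularExpression α) : RESimilar (p.comp RegularExpression.epsilon) p
  | zero_comp (p : RegularExpression α) :
      RESimilar (RegularExpression.zero.comp p) RegularExpression.zero
  | comp_zero (p : RegularExpression α) :
      RESimilar (p.comp RegularExpression.zero) RegularExpression.zero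


/-- `IsUnion r` holds when the top node of `r` is a union. -/
def IsUnion : RegularExpression α → Prop
  | RegularExpression.plus _ _ => True
  | _ => False

/-- `IsComp r` holds when the top node of `r` is a concatenation. -/
def IsComp : RegularExpression α → Prop
  | RegularExpression.comp _ _ => True
  | _ => False

/-- Normal form with respect to a linear order `R` on regular expressions. -/
def NormalForm (R : LinearOrder (RegularExpression α)) : RegularExpression α → Prop
  | RegularExpression.zero => True
  | RegularExpression.epsilon => True
  | RegularExpression.char _ => True
  | RegularExpression.plus p q =>
      ((∃ q₁ q₂ : RegularExpression α, q = RegularExpression.plus q₁ q₂ ∧ p ≠ q₁ ∧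
          q₁ ≠ RegularExpression.zero ∧ R.lt p q₁) ∨
        (¬ IsUnion q ∧ p ≠ q ∧ q ≠ RegularExpression.zero ∧ R.lt p q)) ∧
      NormalForm R p ∧ NormalForm R q ∧ ¬ IsUnion p ∧ p ≠ RegularExpression.zero
  | RegularExpression.comp p q =>
      NormalForm R p ∧ NormalForm R q ∧ ¬ IsComp p ∧
      p ≠ RegularExpression.zero ∧ p ≠ RegularExpression.epsilon ∧
      q ≠ RegularExpression.zero ∧ q ≠ RegularExpression.epsilon
  | RegularExpression.star p => NormalForm R p

/-- Head of a right-nested union. -/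
def hd : RegularExpression α → RegularExpression α
  | RegularExpression.plus a _ => a
  | r => r

@[simp] lemma hd_plus (a b : RegularExpression α) : hd (RegularExpression.plus a b) = a := rfl

lemma hd_of_not_union {q : RegularExpression α} (h : ¬ IsUnion q) : hd q = q := by
  cases q <;> first | rfl | exact absurd trivial h

lemma nf_plus_iff (R : LinearOrder (RegularExpression α)) (p q : RegularExpression α) :
    NormalForm R (RegularExpression.plus p q) ↔
      ((∃ q₁ q₂ : RegularExpression α, q = RegularExpression.plus q₁ q₂ ∧ p ≠ q₁ ∧
          q₁ ≠ RegularExpression.zero ∧ R.lt p q₁) ∨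
        (¬ IsUnion q ∧ p ≠ q ∧ q ≠ RegularExpression.zero ∧ R.lt p q)) ∧
      NormalForm R p ∧ NormalForm R q ∧ ¬ IsUnion p ∧ p ≠ RegularExpression.zero := Iff.rfl

lemma nf_hd_not_union {R : LinearOrder (RegularExpression α)} {q : RegularExpression α}
    (h : NormalForm R q) : ¬ IsUnion (hd q) := by
  cases q with
  | plus a b => exact ((nf_plus_iff R a b).1 h).2.2.2.1
  | zero => simp [IsUnion, hd]
  | epsilon => simp [IsUnion, hd]
  | char c => simp [IsUnion, hd]
  | comp a b => simp [IsUnion, hd]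
  | star a => simp [IsUnion, hd]

lemma nf_hd_ne_zero {R : LinearOrder (RegularExpression α)} {q : RegularExpression α}
    (h : NormalForm R q) (h0 : q ≠ RegularExpression.zero) : hd q ≠ RegularExpression.zero := by
  cases q with
  | plus a b => exact ((nf_plus_iff R a b).1 h).2.2.2.2
  | zero => exact absurd rfl h0
  | epsilon => simp [hd]
  | char c => simp [hd]
  | comp a b => simp [hd]
  | star a => simp [hd]

lemma nf_hd_lt {R : LinearOrder (RegularExpression α)} {q₁ q₂ : RegularExpression α}
    (h : NormalForm R (RegularExpression.plus q₁ q₂)) : R.lt q₁ (hd q₂) := by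
  rcases ((nf_plus_iff R q₁ q₂).1 h).1 with ⟨a, b, rfl, _, _, hlt⟩ | ⟨_, _, _, hlt⟩
  · exact hlt
  · rwa [hd_of_not_union (by assumption)]

lemma nf_q2_ne_zero {R : LinearOrder (RegularExpression α)} {q₁ q₂ : RegularExpression α}
    (h : NormalForm R (RegularExpression.plus q₁ q₂)) : q₂ ≠ RegularExpression.zero := by
  rcases ((nf_plus_iff R q₁ q₂).1 h).1 with ⟨a, b, rfl, _⟩ | ⟨_, _, h0, _⟩
  · intro hc; cases hc
  · exact h0

lemma nf_plus_intro {R : LinearOrder (RegularExpression α)} {x q : RegularExpression α}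
    (hx : NormalForm R x) (hq : NormalForm R q) (hxu : ¬ IsUnion x)
    (hx0 : x ≠ RegularExpression.zero) (hq0 : q ≠ RegularExpression.zero)
    (hlt : R.lt x (hd q)) : NormalForm R (RegularExpression.plus x q) := by
  letI := R
  refine (nf_plus_iff R x q).2 ⟨?_, hx, hq, hxu, hx0⟩
  cases q with
  | plus a b =>
      exact Or.inl ⟨a, b, rfl, ne_of_lt hlt, ((nf_plus_iff R a b).1 hq).2.2.2.2, hlt⟩
  | zero => exact absurd rfl hq0
  | epsilon => exact Or.inr ⟨by simp [IsUnion], ne_of_lt hlt, hq0, hlt⟩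
  | char c => exact Or.inr ⟨by simp [IsUnion], ne_of_lt hlt, hq0, hlt⟩
  | comp a b => exact Or.inr ⟨by simp [IsUnion], ne_of_lt hlt, hq0, hlt⟩
  | star a => exact Or.inr ⟨by simp [IsUnion], ne_of_lt hlt, hq0, hlt⟩

/- Similarity helpers -/
lemma sim_zero_plus (p : RegularExpression α) :
    RESimilar (RegularExpression.zero.plus p) p :=
  RESimilar.trans (RESimilar.plus_comm _ _) (RESimilar.plus_zero p)

lemma sim_swap (x a b : RegularExpression α) :
    RESimilar (x.plus (a.plus b)) (a.plus (x.plus b)) :=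
  RESimilar.trans (RESimilar.plus_assoc _ _ _)
    (RESimilar.trans (RESimilar.plus_congr (RESimilar.plus_comm _ _) (RESimilar.refl _))
      (RESimilar.symm (RESimilar.plus_assoc _ _ _)))

lemma sim_dup (x b : RegularExpression α) :
    RESimilar (x.plus (x.plus b)) (x.plus b) :=
  RESimilar.trans (RESimilar.plus_assoc _ _ _)
    (RESimilar.plus_congr (RESimilar.plus_self _) (RESimilar.refl _))

/-- Inserting a non-union, nonzero normal form into a normal form. -/
lemma insert_norm (R : LinearOrder (RegularExpression α)) :
    ∀ (q x : RegularExpression α), NormalForm R q → NormalForm R x → ¬ IsUnion x →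
      x ≠ RegularExpression.zero →
      ∃ r, NormalForm R r ∧ RESimilar (x.plus q) r ∧ (hd r = x ∨ hd r = hd q) ∧
        r ≠ RegularExpression.zero := by
  letI := R
  intro q
  induction q with
  | plus q₁ q₂ ih₁ ih₂ =>
      intro x hq hx hxu hx0
      obtain ⟨_, hq₁, hq₂, hq₁u, hq₁0⟩ := (nf_plus_iff R q₁ q₂).1 hq
      rcases lt_trichotomy x q₁ with hlt | heq | hgt
      · refine ⟨x.plus (q₁.plus q₂), ?_, RESimilar.refl _, Or.inl rfl, by intro hc; cases hc⟩
        exact nf_plus_intro hx hq hxu hx0 (by intro hc; cases hc) hlt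
      · subst heq
        exact ⟨x.plus q₂, hq, sim_dup _ _, Or.inr rfl, by intro hc; cases hc⟩
      · obtain ⟨r₂, hr₂, hs₂, hh₂, hr₂0⟩ := ih₂ x hq₂ hx hxu hx0
        have hlt' : R.lt q₁ (hd r₂) := by
          rcases hh₂ with h | h
          · rw [h]; exact hgt
          · rw [h]; exact nf_hd_lt hq
        refine ⟨q₁.plus r₂, nf_plus_intro hq₁ hr₂ hq₁u hq₁0 hr₂0 hlt', ?_, Or.inr rfl,
          by intro hc; cases hc⟩
        exact RESimilar.trans (sim_swap _ _ _) (RESimilar.plus_congr (RESimilar.refl _) hs₂)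
  | zero =>
      intro x _ hx hxu hx0
      exact ⟨x, hx, RESimilar.plus_zero x, Or.inl (hd_of_not_union hxu), hx0⟩
  | epsilon =>
      intro x hq hx hxu hx0
      rcases lt_trichotomy x RegularExpression.epsilon with hlt | heq | hgt
      · exact ⟨_, nf_plus_intro hx hq hxu hx0 (by intro hc; cases hc) hlt,
          RESimilar.refl _, Or.inl rfl, by intro hc; cases hc⟩
      · subst heq; exact ⟨_, hq, RESimilar.plus_self _, Or.inr (hd_of_not_union hxu), by intro hc; cases hc⟩
      · refine ⟨RegularExpression.epsilon.plus x,
          nf_plus_intro hq hx (by simp [IsUnion]) (by intro hc; cases hc) hx0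
            (by rwa [hd_of_not_union hxu]), RESimilar.plus_comm _ _, Or.inr rfl, by intro hc; cases hc⟩
  | char c =>
      intro x hq hx hxu hx0
      rcases lt_trichotomy x (RegularExpression.char c) with hlt | heq | hgt
      · exact ⟨_, nf_plus_intro hx hq hxu hx0 (by intro hc; cases hc) hlt,
          RESimilar.refl _, Or.inl rfl, by intro hc; cases hc⟩
      · subst heq; exact ⟨_, hq, RESimilar.plus_self _, Or.inr (hd_of_not_union hxu), by intro hc; cases hc⟩
      · refine ⟨(RegularExpression.char c).plus x,
          nf_plus_intro hq hx (by simp [IsUnion]) (by intro hc; cases hc) hx0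
            (by rwa [hd_of_not_union hxu]), RESimilar.plus_comm _ _, Or.inr rfl, by intro hc; cases hc⟩
  | comp a b iha ihb =>
      intro x hq hx hxu hx0
      rcases lt_trichotomy x (a.comp b) with hlt | heq | hgt
      · exact ⟨_, nf_plus_intro hx hq hxu hx0 (by intro hc; cases hc) hlt,
          RESimilar.refl _, Or.inl rfl, by intro hc; cases hc⟩
      · subst heq; exact ⟨_, hq, RESimilar.plus_self _, Or.inr (hd_of_not_union hxu), by intro hc; cases hc⟩
      · refine ⟨(a.comp b).plus x,
          nf_plus_intro hq hx (by simp [IsUnion]) (by intro hc; cases hc) hx0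
            (by rwa [hd_of_not_union hxu]), RESimilar.plus_comm _ _, Or.inr rfl, by intro hc; cases hc⟩
  | star a iha =>
      intro x hq hx hxu hx0
      rcases lt_trichotomy x a.star with hlt | heq | hgt
      · exact ⟨_, nf_plus_intro hx hq hxu hx0 (by intro hc; cases hc) hlt,
          RESimilar.refl _, Or.inl rfl, by intro hc; cases hc⟩
      · subst heq; exact ⟨_, hq, RESimilar.plus_self _, Or.inr (hd_of_not_union hxu), by intro hc; cases hc⟩
      · refine ⟨a.star.plus x,
          nf_plus_intro hq hx (by simp [IsUnion]) (by intro hc; cases hc) hx0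
            (by rwa [hd_of_not_union hxu]), RESimilar.plus_comm _ _, Or.inr rfl, by intro hc; cases hc⟩

lemma plus_norm (R : LinearOrder (RegularExpression α)) :
    ∀ (p q : RegularExpression α), NormalForm R p → NormalForm R q →
      ∃ r, NormalForm R r ∧ RESimilar (p.plus q) r := by
  intro p
  induction p with
  | plus p₁ p₂ ih₁ ih₂ =>
      intro q hp hq
      obtain ⟨_, hp₁, hp₂, hp₁u, hp₁0⟩ := (nf_plus_iff R p₁ p₂).1 hp
      obtain ⟨r₂, hr₂, hs₂⟩ := ih₂ q hp₂ hq
      obtain ⟨r, hr, hs, _, _⟩ := insert_norm R r₂ p₁ hr₂ hp₁ hp₁u hp₁0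
      refine ⟨r, hr, ?_⟩
      exact RESimilar.trans (RESimilar.symm (RESimilar.plus_assoc _ _ _))
        (RESimilar.trans (RESimilar.plus_congr (RESimilar.refl _) hs₂) hs)
  | zero => intro q _ hq; exact ⟨q, hq, sim_zero_plus q⟩
  | epsilon =>
      intro q hp hq
      obtain ⟨r, hr, hs, _, _⟩ := insert_norm R q _ hq hp (by simp [IsUnion]) (by intro hc; cases hc)
      exact ⟨r, hr, hs⟩
  | char c =>
      intro q hp hq
      obtain ⟨r, hr, hs, _, _⟩ := insert_norm R q _ hq hp (by simp [IsUnion]) (by intro hc; cases hc)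
      exact ⟨r, hr, hs⟩
  | comp a b _ _ =>
      intro q hp hq
      obtain ⟨r, hr, hs, _, _⟩ := insert_norm R q _ hq hp (by simp [IsUnion]) (by intro hc; cases hc)
      exact ⟨r, hr, hs⟩
  | star a _ =>
      intro q hp hq
      obtain ⟨r, hr, hs, _, _⟩ := insert_norm R q _ hq hp (by simp [IsUnion]) (by intro hc; cases hc)
      exact ⟨r, hr, hs⟩

/-- Composing two normal forms, assuming the left one is not a comp and not 0/ε. -/
lemma comp_norm_base {R : LinearOrder (RegularExpression α)} {p q : RegularExpression α}
    (hp : NormalForm R p) (hq : NormalForm R q) (hpc : ¬ IsComp p)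
    (hp0 : p ≠ RegularExpression.zero) (hpe : p ≠ RegularExpression.epsilon) :
    ∃ r, NormalForm R r ∧ RESimilar (p.comp q) r := by
  by_cases hq0 : q = RegularExpression.zero
  · subst hq0; exact ⟨RegularExpression.zero, trivial, RESimilar.comp_zero p⟩
  by_cases hqe : q = RegularExpression.epsilon
  · subst hqe; exact ⟨p, hp, RESimilar.comp_eps p⟩
  · exact ⟨p.comp q, ⟨hp, hq, hpc, hp0, hpe, hq0, hqe⟩, RESimilar.refl _⟩

lemma comp_norm (R : LinearOrder (RegularExpression α)) :
    ∀ (p q : RegularExpression α), NormalForm R p → NormalForm R q →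
      ∃ r, NormalForm R r ∧ RESimilar (p.comp q) r := by
  intro p
  induction p with
  | comp p₁ p₂ ih₁ ih₂ =>
      intro q hp hq
      obtain ⟨hp₁, hp₂, hp₁c, hp₁0, hp₁e, hp₂0, hp₂e⟩ := hp
      obtain ⟨r₂, hr₂, hs₂⟩ := ih₂ q hp₂ hq
      have hsim : RESimilar ((p₁.comp p₂).comp q) (p₁.comp r₂) :=
        RESimilar.trans (RESimilar.symm (RESimilar.comp_assoc _ _ _))
          (RESimilar.comp_congr (RESimilar.refl _) hs₂)
      by_cases hr₂0 : r₂ = RegularExpression.zero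
      · subst hr₂0
        exact ⟨RegularExpression.zero, trivial, RESimilar.trans hsim (RESimilar.comp_zero p₁)⟩
      by_cases hr₂e : r₂ = RegularExpression.epsilon
      · subst hr₂e
        exact ⟨p₁, hp₁, RESimilar.trans hsim (RESimilar.comp_eps p₁)⟩
      · exact ⟨p₁.comp r₂, ⟨hp₁, hr₂, hp₁c, hp₁0, hp₁e, hr₂0, hr₂e⟩, hsim⟩
  | zero => intro q _ _; exact ⟨RegularExpression.zero, trivial, RESimilar.zero_comp q⟩
  | epsilon => intro q _ hq; exact ⟨q, hq, RESimilar.eps_comp q⟩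
  | char c =>
      intro q hp hq
      exact comp_norm_base hp hq (by simp [IsComp]) (by intro hc; cases hc) (by intro hc; cases hc)
  | plus a b _ _ =>
      intro q hp hq
      exact comp_norm_base hp hq (by simp [IsComp]) (by intro hc; cases hc) (by intro hc; cases hc)
  | star a _ =>
      intro q hp hq
      exact comp_norm_base hp hq (by simp [IsComp]) (by intro hc; cases hc) (by intro hc; cases hc)


theorem exists_normal_form (R : LinearOrder (RegularExpression α))
    (r : RegularExpression α) :
    ∃ r' : RegularExpression α, NormalForm R r' ∧ RESimilar r r' := by
  induction r with
  | zero => exact ⟨RegularExpression.zero, trivial, RESimilar.refl _⟩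
  | epsilon => exact ⟨RegularExpression.epsilon, trivial, RESimilar.refl _⟩
  | char c => exact ⟨RegularExpression.char c, trivial, RESimilar.refl _⟩
  | plus p q ihp ihq =>
      obtain ⟨p', hp', hsp⟩ := ihp
      obtain ⟨q', hq', hsq⟩ := ihq
      obtain ⟨r, hr, hs⟩ := plus_norm R p' q' hp' hq'
      exact ⟨r, hr, RESimilar.trans (RESimilar.plus_congr hsp hsq) hs⟩
  | comp p q ihp ihq =>
      obtain ⟨p', hp', hsp⟩ := ihp
      obtain ⟨q', hq', hsq⟩ := ihq
      obtain ⟨r, hr, hs⟩ := comp_norm R p' q' hp' hq'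
      exact ⟨r, hr, RESimilar.trans (RESimilar.comp_congr hsp hsq) hs⟩
  | star p ihp =>
      obtain ⟨p', hp', hsp⟩ := ihp
      exact ⟨p'.star, hp', RESimilar.star_congr hsp⟩
end

section
/- For any linear order R on regular expressions over an alphabet Σ, if p and q are regular expressions that are both in normal form with respect to R and p is similar to q, then p = q. Equivalently, a regular expression in normal form is not similar to any normal-form regular expression other than itself. -/
open RegularExpression

variable {α : Type*}

/-- Similarity: the smallest congruence on regular expressions containing the
listed Kleene-algebra axioms. -/
inductive RegexSimilar : RegularExpression α → RegularExpression α → Prop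
  | refl (p : RegularExpression α) : RegexSimilar p p
  | symm {p q : RegularExpression α} : RegexSimilar p q → RegexSimilar q p
  | trans {p q r : RegularExpression α} : RegexSimilar p q → RegexSimilar q r → RegexSimilar p r
  | plus_congr {p p' q q' : RegularExpression α} :
      RegexSimilar p p' → RegexSimilar q q' → RegexSimilar (p.plus q) (p'.plus q')
  | comp_congr {p p' q q' : RegularExpression α} :
      RegexSimilar p p' → RegexSimilar q q' → RegexSimilar (p.comp q) (p'.comp q')
  | star_congr {p p' : RegularExpression α} : RegexSimilar p p' → RegexSimilar p.star p'.star
  | plus_assoc (p q r : RegularExpression α) : RegexSimilar (p.plus (q.plus r)) ((p.plus q).plus r)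
  | plus_comm (p q : RegularExpression α) : RegexSimilar (p.plus q) (q.plus p)
  | plus_zero (p : RegularExpression α) : RegexSimilar (p.plus RegularExpression.zero) p
  | plus_self (p : RegularExpression α) : RegexSimilar (p.plus p) p
  | comp_assoc (p q r : RegularExpression α) : RegexSimilar (p.comp (q.comp r)) ((p.comp q).comp r)
  | eps_comp (p : RegularExpression α) : RegexSimilar (RegularExpression.epsilon.comp p) p
  | comp_eps (p : RegularExpression α) : RegexSimilar (p.comp RegularExpression.epsilon) p
  | zero_comp (p : RegularExpression α) :
      RegexSimilar (RegularExpression.zero.comp p) RegularExpression.zero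
  | comp_zero (p : RegularExpression α) :
      RegexSimilar (p.comp RegularExpression.zero) RegularExpression.zero


section AuxNF

variable (R : LinearOrder (RegularExpression α))

/-- Flatten a regex into the list of its union leaves, dropping zeros. -/
def toL : RegularExpression α → List (RegularExpression α)
  | RegularExpression.zero => []
  | RegularExpression.plus a b => toL a ++ toL b
  | r => [r]

def fromL : List (RegularExpression α) → RegularExpression α
  | [] => RegularExpression.zero
  | [x] => x
  | x :: y :: t => RegularExpression.plus x (fromL (y :: t))

def finU (s t : Finset (RegularExpression α)) : Finset (RegularExpression α) :=
  letI := R.toDecidableEq; s ∪ t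

def toFL (l : List (RegularExpression α)) : Finset (RegularExpression α) :=
  letI := R.toDecidableEq; l.toFinset

def toF : RegularExpression α → Finset (RegularExpression α)
  | RegularExpression.zero => ∅
  | RegularExpression.plus a b => finU R (toF a) (toF b)
  | r => {r}

def sortF (s : Finset (RegularExpression α)) : List (RegularExpression α) :=
  letI := R
  s.sort (· ≤ ·)

def fromF (s : Finset (RegularExpression α)) : RegularExpression α :=
  fromL (sortF R s)

def scomp : RegularExpression α → RegularExpression α → RegularExpression α
  | RegularExpression.zero, _ => RegularExpression.zero
  | _, RegularExpression.zero => RegularExpression.zero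
  | RegularExpression.epsilon, q => q
  | p, RegularExpression.epsilon => p
  | RegularExpression.comp a b, q => RegularExpression.comp a (scomp b q)
  | p, q => RegularExpression.comp p q

def N : RegularExpression α → RegularExpression α
  | RegularExpression.plus a b => fromF R (finU R (toF R (N a)) (toF R (N b)))
  | RegularExpression.comp a b => scomp (N a) (N b)
  | RegularExpression.star a => RegularExpression.star (N a)
  | r => r

theorem mem_finU {s t : Finset (RegularExpression α)} {x} :
    x ∈ finU R s t ↔ x ∈ s ∨ x ∈ t := by
  letI := R.toDecidableEq; simp [finU]

theorem finU_assoc (s t u) : finU R s (finU R t u) = finU R (finU R s t) u := by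
  letI := R.toDecidableEq; simp [finU, Finset.union_assoc]

theorem finU_comm (s t) : finU R s t = finU R t s := by
  letI := R.toDecidableEq; simp [finU, Finset.union_comm]

theorem finU_self (s) : finU R s s = s := by
  letI := R.toDecidableEq; simp [finU]

theorem finU_empty (s) : finU R s ∅ = s := by
  letI := R.toDecidableEq; simp [finU]

theorem mem_toF : ∀ {r x : RegularExpression α}, x ∈ toF R r →
    ¬ IsUnion x ∧ x ≠ RegularExpression.zero := by
  intro r
  induction r with
  | zero => intro x hx; simp [toF] at hx
  | plus a b iha ihb =>
      intro x hx
      rcases (mem_finU R).mp hx with h | h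
      · exact iha h
      · exact ihb h
  | epsilon => intro x hx; simp [toF] at hx; subst hx; simp [IsUnion]
  | char c => intro x hx; simp [toF] at hx; subst hx; simp [IsUnion]
  | comp a b _ _ => intro x hx; simp [toF] at hx; subst hx; simp [IsUnion]
  | star a _ => intro x hx; simp [toF] at hx; subst hx; simp [IsUnion]

theorem toF_atom {r : RegularExpression α} (h1 : ¬ IsUnion r)
    (h2 : r ≠ RegularExpression.zero) : toF R r = {r} := by
  cases r <;> first | rfl | (exact absurd rfl h2) | (exact absurd trivial h1)

theorem toL_atom {r : RegularExpression α} (h1 : ¬ IsUnion r)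
    (h2 : r ≠ RegularExpression.zero) : toL r = [r] := by
  cases r <;> first | rfl | (exact absurd rfl h2) | (exact absurd trivial h1)

theorem toF_toL : ∀ r : RegularExpression α, toF R r = toFL R (toL r) := by
  intro r
  induction r with
  | zero => letI := R.toDecidableEq; simp [toF, toL, toFL]
  | plus a b iha ihb =>
      letI := R.toDecidableEq
      simp [toF, toL, toFL, finU, iha, ihb]
  | epsilon => letI := R.toDecidableEq; simp [toF, toL, toFL]
  | char c => letI := R.toDecidableEq; simp [toF, toL, toFL]
  | comp a b _ _ => letI := R.toDecidableEq; simp [toF, toL, toFL]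
  | star a _ => letI := R.toDecidableEq; simp [toF, toL, toFL]

theorem toF_fromL : ∀ l : List (RegularExpression α),
    (∀ x ∈ l, ¬ IsUnion x ∧ x ≠ RegularExpression.zero) →
    toF R (fromL l) = toFL R l := by
  intro l
  induction l with
  | nil => intro _; letI := R.toDecidableEq; simp [fromL, toF, toFL]
  | cons x t ih =>
      intro h
      cases t with
      | nil =>
          letI := R.toDecidableEq
          have := h x (by simp)
          rw [show fromL [x] = x from rfl, toF_atom R this.1 this.2]
          simp [toFL]
      | cons y t' =>
          letI := R.toDecidableEq
          have hx := h x (by simp)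
          rw [show fromL (x :: y :: t') = RegularExpression.plus x (fromL (y :: t')) from rfl]
          rw [show toF R (RegularExpression.plus x (fromL (y :: t')))
              = finU R (toF R x) (toF R (fromL (y :: t'))) from rfl]
          rw [toF_atom R hx.1 hx.2, ih (fun z hz => h z (by simp [hz]))]
          simp [finU, toFL, Finset.insert_eq, -Finset.singleton_union]

theorem mem_sortF {s : Finset (RegularExpression α)} {x} : x ∈ sortF R s ↔ x ∈ s := by
  letI := R; simp [sortF, Finset.mem_sort]

theorem toFL_sortF (s : Finset (RegularExpression α)) : toFL R (sortF R s) = s := by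
  letI := R; letI := R.toDecidableEq
  simp [toFL, sortF, Finset.sort_toFinset]

theorem sortF_sorted_lt {l : List (RegularExpression α)} (hl : List.Pairwise R.lt l) :
    sortF R (toFL R l) = l := by
  letI := R; letI := R.toDecidableEq
  have hlt : List.Pairwise (· < ·) l := hl
  have hnd : l.Nodup := hlt.nodup
  have h2 : (toFL R l).val = (l : Multiset (RegularExpression α)) := by
    show (Multiset.dedup ↑l) = (↑l : Multiset (RegularExpression α))
    exact Multiset.dedup_eq_self.mpr (by exact_mod_cast hnd)
  have hperm : (sortF R (toFL R l)).Perm l := by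
    have h1 : ((toFL R l).sort (· ≤ ·) : Multiset (RegularExpression α)) = (toFL R l).val :=
      Finset.sort_eq _ _
    exact Multiset.coe_eq_coe.mp (h1.trans h2)
  exact hperm.eq_of_pairwise' (Finset.pairwise_sort _ _) (hlt.imp le_of_lt)

theorem fromF_empty : fromF R (∅ : Finset (RegularExpression α)) = RegularExpression.zero := by
  letI := R
  rw [fromF, show sortF R (∅ : Finset (RegularExpression α)) = [] from Finset.sort_empty _]
  rfl

theorem fromF_singleton (r : RegularExpression α) : fromF R {r} = r := by
  letI := R
  rw [fromF, show sortF R ({r} : Finset (RegularExpression α)) = [r] from Finset.sort_singleton _ r]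
  rfl

theorem good_atom {r : RegularExpression α} (h : ¬ IsUnion r) :
    fromF R (toF R r) = r := by
  rcases eq_or_ne r RegularExpression.zero with rfl | h0
  · rw [show toF R RegularExpression.zero = ∅ from rfl, fromF_empty]
  · rw [toF_atom R h h0, fromF_singleton]

theorem toF_fromF {s : Finset (RegularExpression α)}
    (h : ∀ x ∈ s, ¬ IsUnion x ∧ x ≠ RegularExpression.zero) :
    toF R (fromF R s) = s := by
  rw [fromF, toF_fromL R _ (fun x hx => h x ((mem_sortF R).mp hx)), toFL_sortF]

theorem mem_finU_toF {a b : RegularExpression α} :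
    ∀ x ∈ finU R (toF R a) (toF R b), ¬ IsUnion x ∧ x ≠ RegularExpression.zero := by
  intro x hx
  rcases (mem_finU R).mp hx with h | h
  exacts [mem_toF R h, mem_toF R h]

theorem scomp_zero_left (q : RegularExpression α) :
    scomp RegularExpression.zero q = RegularExpression.zero := by cases q <;> rfl
theorem scomp_zero_right (p : RegularExpression α) :
    scomp p RegularExpression.zero = RegularExpression.zero := by cases p <;> rfl
theorem scomp_eps_left (q : RegularExpression α) :
    scomp RegularExpression.epsilon q = q := by cases q <;> rfl
theorem scomp_eps_right (p : RegularExpression α) :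
    scomp p RegularExpression.epsilon = p := by cases p <;> rfl

theorem scomp_comp_left (a b : RegularExpression α) {q : RegularExpression α}
    (h0 : q ≠ RegularExpression.zero) (h1 : q ≠ RegularExpression.epsilon) :
    scomp (RegularExpression.comp a b) q = RegularExpression.comp a (scomp b q) := by
  cases q <;> simp_all [scomp]

theorem scomp_atom {p q : RegularExpression α} (hc : ¬ IsComp p)
    (hp0 : p ≠ RegularExpression.zero) (hp1 : p ≠ RegularExpression.epsilon)
    (hq0 : q ≠ RegularExpression.zero) (hq1 : q ≠ RegularExpression.epsilon) :
    scomp p q = RegularExpression.comp p q := by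
  cases p <;> cases q <;> simp_all [scomp, IsComp]

theorem scomp_ne {p q : RegularExpression α}
    (hp0 : p ≠ RegularExpression.zero) (hp1 : p ≠ RegularExpression.epsilon)
    (hq0 : q ≠ RegularExpression.zero) (hq1 : q ≠ RegularExpression.epsilon) :
    scomp p q ≠ RegularExpression.zero ∧ scomp p q ≠ RegularExpression.epsilon := by
  cases p <;> cases q <;> simp_all [scomp]

theorem scomp_assoc (p q r : RegularExpression α) :
    scomp p (scomp q r) = scomp (scomp p q) r := by
  induction p generalizing q r with
  | zero => simp only [scomp_zero_left]
  | epsilon => simp only [scomp_eps_left]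
  | comp a b iha ihb =>
      rcases eq_or_ne q RegularExpression.zero with rfl | hq0
      · simp only [scomp_zero_left, scomp_zero_right]
      rcases eq_or_ne q RegularExpression.epsilon with rfl | hq1
      · simp only [scomp_eps_left, scomp_eps_right]
      rcases eq_or_ne r RegularExpression.zero with rfl | hr0
      · simp only [scomp_zero_right]
      rcases eq_or_ne r RegularExpression.epsilon with rfl | hr1
      · simp only [scomp_eps_right]
      have h := scomp_ne hq0 hq1 hr0 hr1
      rw [scomp_comp_left a b h.1 h.2, scomp_comp_left a b hq0 hq1,
        scomp_comp_left a (scomp b q) hr0 hr1, ihb]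
  | char c =>
      rcases eq_or_ne q RegularExpression.zero with rfl | hq0
      · simp only [scomp_zero_left, scomp_zero_right]
      rcases eq_or_ne q RegularExpression.epsilon with rfl | hq1
      · simp only [scomp_eps_left, scomp_eps_right]
      rcases eq_or_ne r RegularExpression.zero with rfl | hr0
      · simp only [scomp_zero_right]
      rcases eq_or_ne r RegularExpression.epsilon with rfl | hr1
      · simp only [scomp_eps_right]
      have h := scomp_ne hq0 hq1 hr0 hr1
      rw [scomp_atom (by simp [IsComp]) (by simp) (by simp) h.1 h.2,
        scomp_atom (by simp [IsComp]) (by simp) (by simp) hq0 hq1,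
        scomp_comp_left _ q hr0 hr1]
  | plus a b _ _ =>
      rcases eq_or_ne q RegularExpression.zero with rfl | hq0
      · simp only [scomp_zero_left, scomp_zero_right]
      rcases eq_or_ne q RegularExpression.epsilon with rfl | hq1
      · simp only [scomp_eps_left, scomp_eps_right]
      rcases eq_or_ne r RegularExpression.zero with rfl | hr0
      · simp only [scomp_zero_right]
      rcases eq_or_ne r RegularExpression.epsilon with rfl | hr1
      · simp only [scomp_eps_right]
      have h := scomp_ne hq0 hq1 hr0 hr1
      rw [scomp_atom (by simp [IsComp]) (by simp) (by simp) h.1 h.2,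
        scomp_atom (by simp [IsComp]) (by simp) (by simp) hq0 hq1,
        scomp_comp_left _ q hr0 hr1]
  | star a _ =>
      rcases eq_or_ne q RegularExpression.zero with rfl | hq0
      · simp only [scomp_zero_left, scomp_zero_right]
      rcases eq_or_ne q RegularExpression.epsilon with rfl | hq1
      · simp only [scomp_eps_left, scomp_eps_right]
      rcases eq_or_ne r RegularExpression.zero with rfl | hr0
      · simp only [scomp_zero_right]
      rcases eq_or_ne r RegularExpression.epsilon with rfl | hr1
      · simp only [scomp_eps_right]
      have h := scomp_ne hq0 hq1 hr0 hr1
      rw [scomp_atom (by simp [IsComp]) (by simp) (by simp) h.1 h.2,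
        scomp_atom (by simp [IsComp]) (by simp) (by simp) hq0 hq1,
        scomp_comp_left _ q hr0 hr1]

theorem scomp_shape (p q : RegularExpression α) :
    ¬ IsUnion (scomp p q) ∨ scomp p q = p ∨ scomp p q = q := by
  cases p <;> cases q <;> simp [scomp, IsUnion]

theorem good_N (p : RegularExpression α) : fromF R (toF R (N R p)) = N R p := by
  induction p with
  | plus a b iha ihb =>
      rw [show N R (a.plus b) = fromF R (finU R (toF R (N R a)) (toF R (N R b))) from rfl]
      rw [toF_fromF R (mem_finU_toF R)]
  | comp a b iha ihb =>
      rw [show N R (a.comp b) = scomp (N R a) (N R b) from rfl]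
      rcases scomp_shape (N R a) (N R b) with h | h | h
      · exact good_atom R h
      · rw [h]; exact iha
      · rw [h]; exact ihb
  | star a _ =>
      rw [show N R a.star = (N R a).star from rfl]
      exact good_atom R (by simp [IsUnion])
  | zero => exact good_atom R (r := RegularExpression.zero) (by simp [IsUnion])
  | epsilon => exact good_atom R (r := RegularExpression.epsilon) (by simp [IsUnion])
  | char c => exact good_atom R (r := RegularExpression.char c) (by simp [IsUnion])

theorem N_similar {p q : RegularExpression α} (h : RegexSimilar p q) : N R p = N R q := by
  induction h with
  | refl _ => rfl
  | symm _ ih => exact ih.symm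
  | trans _ _ ih1 ih2 => exact ih1.trans ih2
  | plus_congr _ _ ih1 ih2 =>
      show fromF R (finU R (toF R (N R _)) (toF R (N R _))) =
        fromF R (finU R (toF R (N R _)) (toF R (N R _)))
      rw [ih1, ih2]
  | comp_congr _ _ ih1 ih2 =>
      show scomp (N R _) (N R _) = scomp (N R _) (N R _)
      rw [ih1, ih2]
  | star_congr _ ih =>
      show (N R _).star = (N R _).star
      rw [ih]
  | plus_assoc p q r =>
      show fromF R (finU R (toF R (N R p)) (toF R (N R (q.plus r)))) =
        fromF R (finU R (toF R (N R (p.plus q))) (toF R (N R r)))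
      rw [show N R (q.plus r) = fromF R (finU R (toF R (N R q)) (toF R (N R r))) from rfl,
        show N R (p.plus q) = fromF R (finU R (toF R (N R p)) (toF R (N R q))) from rfl,
        toF_fromF R (mem_finU_toF R), toF_fromF R (mem_finU_toF R), finU_assoc]
  | plus_comm p q =>
      show fromF R (finU R (toF R (N R p)) (toF R (N R q))) =
        fromF R (finU R (toF R (N R q)) (toF R (N R p)))
      rw [finU_comm]
  | plus_zero p =>
      show fromF R (finU R (toF R (N R p)) (toF R (N R RegularExpression.zero))) = N R p
      rw [show N R RegularExpression.zero = RegularExpression.zero from rfl,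
        show toF R RegularExpression.zero = ∅ from rfl, finU_empty]
      exact good_N R p
  | plus_self p =>
      show fromF R (finU R (toF R (N R p)) (toF R (N R p))) = N R p
      rw [finU_self]; exact good_N R p
  | comp_assoc p q r =>
      show scomp (N R p) (scomp (N R q) (N R r)) = scomp (scomp (N R p) (N R q)) (N R r)
      exact scomp_assoc _ _ _
  | eps_comp p =>
      show scomp RegularExpression.epsilon (N R p) = N R p
      exact scomp_eps_left _
  | comp_eps p =>
      show scomp (N R p) RegularExpression.epsilon = N R p
      exact scomp_eps_right _
  | zero_comp p =>
      show scomp RegularExpression.zero (N R p) = RegularExpression.zero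
      exact scomp_zero_left _
  | comp_zero p =>
      show scomp (N R p) RegularExpression.zero = RegularExpression.zero
      exact scomp_zero_right _

theorem nf_sorted {r : RegularExpression α} (h : NormalForm R r) :
    List.Pairwise R.lt (toL r) ∧ fromL (toL r) = r := by
  induction r with
  | zero => exact ⟨by simp [toL], rfl⟩
  | epsilon => exact ⟨by simp [toL], rfl⟩
  | char c => exact ⟨by simp [toL], rfl⟩
  | comp a b _ _ => exact ⟨by simp [toL], rfl⟩
  | star a _ => exact ⟨by simp [toL], rfl⟩
  | plus p q ihp ihq =>
      obtain ⟨halt, hp, hq, hpu, hp0⟩ := h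
      obtain ⟨hqs, hqe⟩ := ihq hq
      have key : ∀ x ∈ toL q, R.lt p x := by
        rcases halt with ⟨q₁, q₂, rfl, hne, h10, hlt⟩ | ⟨hqu, hne, h0, hlt⟩
        · obtain ⟨_, _, _, hq1u, hq10⟩ := hq
          have hsplit : toL (q₁.plus q₂) = q₁ :: toL q₂ := by
            rw [show toL (q₁.plus q₂) = toL q₁ ++ toL q₂ from rfl, toL_atom hq1u hq10]
            rfl
          intro x hx
          rw [hsplit] at hx
          rcases List.mem_cons.mp hx with rfl | hx2
          · exact hlt
          · have hs := hqs
            rw [hsplit] at hs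
            have h2 := (List.pairwise_cons.mp hs).1 x hx2
            letI := R
            exact lt_trans hlt h2
        · intro x hx
          rw [toL_atom hqu h0] at hx
          rw [List.mem_singleton.mp hx]
          exact hlt
      have hlistsplit : toL (p.plus q) = p :: toL q := by
        rw [show toL (p.plus q) = toL p ++ toL q from rfl, toL_atom hpu hp0]
        rfl
      have hne : toL q ≠ [] := by
        rcases halt with ⟨q₁, q₂, rfl, -, -, -⟩ | ⟨hqu, -, h0, -⟩
        · obtain ⟨-, -, -, hq1u, hq10⟩ := hq
          rw [show toL (q₁.plus q₂) = toL q₁ ++ toL q₂ from rfl, toL_atom hq1u hq10]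
          simp
        · rw [toL_atom hqu h0]
          simp
      constructor
      · rw [hlistsplit]
        exact List.pairwise_cons.mpr ⟨key, hqs⟩
      · rw [hlistsplit]
        obtain ⟨y, t, ht⟩ := List.exists_cons_of_ne_nil hne
        rw [ht, show fromL (p :: y :: t) = RegularExpression.plus p (fromL (y :: t)) from rfl,
          ← ht, hqe]

theorem nf_fix {r : RegularExpression α} (h : NormalForm R r) : N R r = r := by
  induction r with
  | zero => rfl
  | epsilon => rfl
  | char c => rfl
  | star a ih =>
      show (N R a).star = a.star
      rw [ih h]
  | comp a b iha ihb =>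
      obtain ⟨ha, hb, hc, h1, h2, h3, h4⟩ := h
      show scomp (N R a) (N R b) = a.comp b
      rw [iha ha, ihb hb]
      exact scomp_atom hc h1 h2 h3 h4
  | plus a b iha ihb =>
      have horig := h
      obtain ⟨halt, hp, hq, hpu, hp0⟩ := h
      show fromF R (finU R (toF R (N R a)) (toF R (N R b))) = a.plus b
      rw [iha hp, ihb hq,
        show finU R (toF R a) (toF R b) = toF R (a.plus b) from rfl,
        toF_toL, fromF]
      obtain ⟨hs, he⟩ := nf_sorted R horig
      rw [sortF_sorted_lt R hs, he]

end AuxNF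

theorem normal_form_unique (R : LinearOrder (RegularExpression α))
    (p q : RegularExpression α)
    (hp : NormalForm R p) (hq : NormalForm R q) (h : RegexSimilar p q) : p = q := by
  calc p = N R p := (nf_fix R hp).symm
    _ = N R q := N_similar R h
    _ = q := nf_fix R hq
end

section
/- Soundness of the EqualSync rule: for regular expressions p and q over an alphabet Σ and any string s, if L(δ_s p) = L(δ_s q), then Sync(s, p, q) holds. -/
open RegularExpression

variable {α : Type*}

/-- The derivative of a regular expression with respect to a string,
folding the Brzozowski character derivative over the string. -/
def derivs [DecidableEq α] (p : RegularExpression α) (w : List α) : RegularExpression α :=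
  w.foldl RegularExpression.deriv p

/-- `w` is a counterexample for `p` and `q` if exactly one of them accepts `w`. -/
def Counterexample (p q : RegularExpression α) (w : List α) : Prop :=
  Xor' (w ∈ p.matches') (w ∈ q.matches')

/-- A string `w` is reducible (for `p` and `q`) if `w = s ++ t ++ u` with `t` nonempty,
`L(δ_s p) = L(δ_{s++t} p)` and `L(δ_s q) = L(δ_{s++t} q)`. -/
def Reducible [DecidableEq α] (p q : RegularExpression α) (w : List α) : Prop :=
  ∃ s t u : List α, w = s ++ t ++ u ∧ t ≠ [] ∧
    (derivs p s).matches' = (derivs p (s ++ t)).matches' ∧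
    (derivs q s).matches' = (derivs q (s ++ t)).matches'

/-- `Sync s p q` : `p` and `q` have no irreducible counterexample having `s` as a prefix. -/
def Sync [DecidableEq α] (s : List α) (p q : RegularExpression α) : Prop :=
  ∀ w : List α, s <+: w → Counterexample p q w → Reducible p q w

/- Equal languages after `s` mean that `p` and `q` agree on every extension of `s`, so no string
with prefix `s` is a counterexample at all and `Sync s p q` holds vacuously. -/

section

variable [DecidableEq α]

theorem rmatch_derivs (p : RegularExpression α) (s u : List α) :
    (derivs p s).rmatch u = p.rmatch (s ++ u) := by
  induction s generalizing p with
  | nil => rfl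
  | cons a s ih => exact ih (p.deriv a)

theorem mem_matches'_derivs (p : RegularExpression α) (s u : List α) :
    u ∈ (derivs p s).matches' ↔ s ++ u ∈ p.matches' := by
  rw [← rmatch_iff_matches', ← rmatch_iff_matches', rmatch_derivs]

theorem not_counterexample_append {p q : RegularExpression α} {s : List α}
    (h : (derivs p s).matches' = (derivs q s).matches') (u : List α) :
    ¬Counterexample p q (s ++ u) := by
  rw [Counterexample, ← mem_matches'_derivs, ← mem_matches'_derivs, h]
  exact (not_xor _ _).2 Iff.rfl

end

theorem equalSync_sound [DecidableEq α] (p q : RegularExpression α) (s : List α)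
    (h : (derivs p s).matches' = (derivs q s).matches') : Sync s p q := by
  rintro _ ⟨u, rfl⟩ hcounter
  exact absurd hcounter (not_counterexample_append h u)
end

section
/- Soundness of the SyncEmpty rule: for regular expressions p and q over an alphabet Σ, if Sync(ε, p, q) holds, then L(p) = L(q). -/
open RegularExpression

variable {α : Type*}

lemma mem_deriv_iff [DecidableEq α] (p : RegularExpression α) (a : α) (x : List α) :
    x ∈ (p.deriv a).matches' ↔ a :: x ∈ p.matches' := by
  rw [← rmatch_iff_matches', ← rmatch_iff_matches']
  rfl

lemma mem_derivs_iff [DecidableEq α] (p : RegularExpression α) (s x : List α) :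
    x ∈ (derivs p s).matches' ↔ s ++ x ∈ p.matches' := by
  induction s generalizing p with
  | nil => rfl
  | cons a s ih => simpa [derivs, List.foldl] using (ih (p.deriv a)).trans (mem_deriv_iff p a _)

theorem syncEmpty_sound [DecidableEq α] (p q : RegularExpression α)
    (h : Sync [] p q) : p.matches' = q.matches' := by
  classical
  by_contra hne
  have hex : ∃ w, Counterexample p q w := by
    by_contra hno
    push_neg at hno
    apply hne
    ext w
    have := hno w
    unfold Counterexample Xor' Xor at this
    tauto
  obtain ⟨w, hw⟩ := hex
  -- take minimal length counterexample
  -- take minimal length counterexample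
  have hex' : ∃ n, ∃ v : List α, v.length = n ∧ Counterexample p q v := ⟨w.length, w, rfl, hw⟩
  obtain ⟨v, hvlen, hv⟩ := Nat.find_spec hex'
  have hmin : ∀ m, m < Nat.find hex' → ¬ ∃ v : List α, v.length = m ∧ Counterexample p q v :=
    fun m hm => Nat.find_min hex' hm
  obtain ⟨s, t, u, hveq, ht, hp, hq⟩ := h v (List.nil_prefix) hv
  subst hveq
  have hpc : (s ++ u) ∈ p.matches' ↔ (s ++ t ++ u) ∈ p.matches' := by
    rw [← mem_derivs_iff p s u, ← mem_derivs_iff p (s ++ t) u, hp]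
  have hqc : (s ++ u) ∈ q.matches' ↔ (s ++ t ++ u) ∈ q.matches' := by
    rw [← mem_derivs_iff q s u, ← mem_derivs_iff q (s ++ t) u, hq]
  have hce : Counterexample p q (s ++ u) := by
    unfold Counterexample Xor' Xor at hv ⊢
    tauto
  have hlen : (s ++ u).length < (s ++ t ++ u).length := by
    simp [List.length_append]
    exact List.length_pos_iff.mpr ht
  have : (s ++ t ++ u).length = Nat.find hex' := hvlen
  exact hmin (s ++ u).length (by omega) ⟨s ++ u, rfl, hce⟩
end

section
/- Soundness of the SyncCycle rule: for regular expressions p and q over an alphabet Σ, a character c, and a string s, if L(δ_{c::s} p) = L(p) and L(δ_{c::s} q) = L(q), then Sync(c::s, p, q) holds. -/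
open RegularExpression

variable {α : Type*}

theorem syncCycle_sound [DecidableEq α] (p q : RegularExpression α) (c : α) (s : List α)
    (hp : (derivs p (c :: s)).matches' = p.matches')
    (hq : (derivs q (c :: s)).matches' = q.matches') : Sync (c :: s) p q := by
  intro w hpre _
  obtain ⟨u, hu⟩ := hpre
  exact ⟨[], c :: s, u, by simp [hu.symm], by simp, by simpa [derivs] using hp.symm, by simpa [derivs] using hq.symm⟩
end

section
/- Soundness of the SyncFold rule: for regular expressions p and q over an alphabet Σ, a character c, and a string s, if Sync(s, δ_c p, δ_c q) holds, then Sync(c::s, p, q) holds. -/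
open RegularExpression

variable {α : Type*}

section Derivatives

variable [DecidableEq α]

theorem mem_matches'_deriv_iff (p : RegularExpression α) (a : α) (x : List α) :
    x ∈ (p.deriv a).matches' ↔ a :: x ∈ p.matches' := by
  rw [← rmatch_iff_matches', ← rmatch_iff_matches', rmatch]

theorem counterexample_deriv_iff (p q : RegularExpression α) (a : α) (w : List α) :
    Counterexample (p.deriv a) (q.deriv a) w ↔ Counterexample p q (a :: w) := by
  simp only [Counterexample, mem_matches'_deriv_iff]

theorem Reducible.cons {p q : RegularExpression α} {a : α} {w : List α}
    (h : Reducible (p.deriv a) (q.deriv a) w) : Reducible p q (a :: w) := by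
  obtain ⟨s, t, u, rfl, ht, hp, hq⟩ := h
  -- `derivs p (a :: s)` unfolds to `derivs (p.deriv a) s`, so `hp` and `hq` apply as they stand.
  exact ⟨a :: s, t, u, rfl, ht, hp, hq⟩

end Derivatives

theorem syncFold_sound [DecidableEq α] (p q : RegularExpression α) (c : α) (s : List α)
    (h : Sync s (p.deriv c) (q.deriv c)) : Sync (c :: s) p q := by
  rintro _ ⟨u, rfl⟩ hce
  exact Reducible.cons <| h (s ++ u) ⟨u, rfl⟩ <|
    (counterexample_deriv_iff p q c (s ++ u)).mpr hce
end

section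
/- Soundness of the Coinduction rule: for regular expressions p and q over an alphabet Σ and a string s, if (ε ∈ L(δ_s p) ↔ ε ∈ L(δ_s q)) and for every character c ∈ Σ, Sync(s ++ [c], p, q) holds, then Sync(s, p, q) holds. -/
open RegularExpression

variable {α : Type*}

theorem mem_matches'_iff_nil_mem_derivs [DecidableEq α] (p : RegularExpression α) (w : List α) :
    w ∈ p.matches' ↔ [] ∈ (derivs p w).matches' := by
  rw [← rmatch_iff_matches', ← rmatch_iff_matches']
  induction w generalizing p with
  | nil => rfl
  | cons c w ih => exact ih (p.deriv c)

theorem counterexample_iff_not_nil_mem_derivs_iff [DecidableEq α] (p q : RegularExpression α)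
    (w : List α) :
    Counterexample p q w ↔ ¬([] ∈ (derivs p w).matches' ↔ [] ∈ (derivs q w).matches') := by
  rw [Counterexample, mem_matches'_iff_nil_mem_derivs p, mem_matches'_iff_nil_mem_derivs q w]
  exact xor_iff_not_iff _ _

theorem coinduction_sound [DecidableEq α] (p q : RegularExpression α) (s : List α)
    (heps : ([] ∈ (derivs p s).matches') ↔ ([] ∈ (derivs q s).matches'))
    (hsync : ∀ c : α, Sync (s ++ [c]) p q) : Sync s p q := by
  rintro w ⟨u, rfl⟩ hce
  cases u with
  | nil =>
    rw [List.append_nil, counterexample_iff_not_nil_mem_derivs_iff] at hce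
    exact absurd heps hce
  | cons c u => exact hsync c (s ++ c :: u) ⟨u, by simp⟩ hce
end

section
/- If w = s ++ t ++ u is a counterexample for regular expressions p and q over an alphabet Σ, with t nonempty, L(δ_s p) = L(δ_{s++t} p), and L(δ_s q) = L(δ_{s++t} q), then s ++ u is also a counterexample for p and q, and s ++ u is strictly shorter than w. -/
open RegularExpression

variable {α : Type*}

theorem Counterexample.of_mem_iff {p q : RegularExpression α} {v w : List α}
    (hce : Counterexample p q v) (hp : v ∈ p.matches' ↔ w ∈ p.matches')
    (hq : v ∈ q.matches' ↔ w ∈ q.matches') : Counterexample p q w := by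
  rwa [Counterexample, ← hp, ← hq]

section Derivs

variable [DecidableEq α]

theorem mem_matches'_append_iff_of_matches'_derivs_eq {p : RegularExpression α} {s t : List α}
    (h : (derivs p s).matches' = (derivs p (s ++ t)).matches') (u : List α) :
    s ++ t ++ u ∈ p.matches' ↔ s ++ u ∈ p.matches' := by
  rw [← mem_matches'_derivs, ← h, mem_matches'_derivs]

end Derivs

theorem reducible_counterexample_shorter [DecidableEq α] (p q : RegularExpression α)
    (s t u : List α)
    (hce : Counterexample p q (s ++ t ++ u)) (ht : t ≠ [])
    (hp : (derivs p s).matches' = (derivs p (s ++ t)).matches')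
    (hq : (derivs q s).matches' = (derivs q (s ++ t)).matches') :
    Counterexample p q (s ++ u) ∧ (s ++ u).length < (s ++ t ++ u).length := by
  refine ⟨hce.of_mem_iff (mem_matches'_append_iff_of_matches'_derivs_eq hp u)
    (mem_matches'_append_iff_of_matches'_derivs_eq hq u), ?_⟩
  simpa using List.length_pos_iff.mpr ht
end

section
/- For every regular expression p over an alphabet Σ, the set of languages of its string derivatives, { L(δ_w p) | w a string over Σ }, is finite. -/
open RegularExpression Computability

variable {α : Type*}

/-- Left quotient of a language by a word. -/
def Quot' (L : Language α) (w : List α) : Language α := {x | w ++ x ∈ L}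

@[simp] lemma mem_Quot' {L : Language α} {w x : List α} : x ∈ Quot' L w ↔ w ++ x ∈ L := Iff.rfl

lemma deriv_matches' [DecidableEq α] (p : RegularExpression α) (a : α) :
    (p.deriv a).matches' = Quot' p.matches' [a] := by
  ext x
  rw [mem_Quot', ← rmatch_iff_matches', ← rmatch_iff_matches']
  rfl

lemma derivs_matches' [DecidableEq α] (p : RegularExpression α) (w : List α) :
    (derivs p w).matches' = Quot' p.matches' w := by
  induction w generalizing p with
  | nil => rfl
  | cons a w ih =>
      have : derivs p (a :: w) = derivs (p.deriv a) w := rfl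
      rw [this, ih, deriv_matches']
      rfl

lemma Quot'_add (L M : Language α) (w : List α) :
    Quot' (L + M) w = Quot' L w + Quot' M w := by
  ext x
  simp only [mem_Quot', Language.mem_add]

lemma Quot'_mul (L M : Language α) (w : List α) :
    Quot' (L * M) w =
      Quot' L w * M + sSup (Quot' M '' {v | ∃ u, u ++ v = w ∧ u ∈ L}) := by
  ext x
  simp only [mem_Quot', Language.mem_add, Language.mem_mul, Set.sSup_eq_sUnion,
    Set.mem_sUnion, Set.mem_image, Set.mem_setOf_eq]
  constructor
  · rintro ⟨y, hy, z, hz, hyz⟩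
    rcases List.append_eq_append_iff.mp hyz with ⟨c, hc, rfl⟩ | ⟨c, rfl, rfl⟩
    · right
      exact ⟨Quot' M c, ⟨c, ⟨y, hc.symm, hy⟩, rfl⟩, hz⟩
    · left
      exact ⟨c, hy, z, hz, rfl⟩
  · rintro (⟨y, hy, z, hz, rfl⟩ | ⟨_, ⟨v, ⟨u, rfl, hu⟩, rfl⟩, hv⟩)
    · exact ⟨w ++ y, hy, z, hz, by simp⟩
    · exact ⟨u, hu, v ++ x, hv, by simp⟩

lemma append_mem_kstar {L : Language α} {y u : List α} (hy : y ∈ L) (hu : u ∈ L∗) :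
    y ++ u ∈ L∗ := by
  rcases Language.mem_kstar.mp hu with ⟨S, rfl, hS⟩
  have : y ++ S.flatten = (y :: S).flatten := by simp
  rw [this]
  exact Language.join_mem_kstar (by
    intro z hz
    rcases List.mem_cons.mp hz with rfl | hz
    · exact hy
    · exact hS z hz)

lemma kstar_split (L : Language α) :
    ∀ (S : List (List α)) (w x : List α), w ≠ [] →
      (∀ y ∈ S, y ∈ L ∧ y ≠ []) → S.flatten = w ++ x →
      ∃ u v, u ++ v = w ∧ u ∈ L∗ ∧ v ≠ [] ∧ x ∈ Quot' L v * L∗ := by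
  intro S
  induction S with
  | nil =>
      intro w x hw _ h
      simp only [List.flatten_nil] at h
      exact absurd (List.append_eq_nil_iff.mp h.symm).1 hw
  | cons y S ih =>
      intro w x hw hmem h
      simp only [List.flatten_cons] at h
      rcases List.append_eq_append_iff.mp h with ⟨a, ha, hx⟩ | ⟨c, hy, hx⟩
      · -- w = y ++ a, S.flatten = a ++ x
        rcases eq_or_ne a [] with rfl | hne
        · -- w = y, x = S.flatten
          refine ⟨[], w, by simp, Language.nil_mem_kstar L, hw, ?_⟩
          have h1 : ([] : List α) ∈ Quot' L w := by
            show w ++ [] ∈ L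
            simpa [ha] using (hmem y List.mem_cons_self).1
          simp only [List.nil_append] at hx
          subst hx
          have h2 : S.flatten ∈ L∗ :=
            Language.join_mem_kstar (fun z hz => (hmem z (List.mem_cons_of_mem _ hz)).1)
          simpa using Language.append_mem_mul h1 h2
        · obtain ⟨u, v, huv, hu, hv, hxm⟩ :=
            ih a x hne (fun z hz => hmem z (List.mem_cons_of_mem _ hz)) hx
          exact ⟨y ++ u, v, by rw [List.append_assoc, huv, ← ha],
            append_mem_kstar (hmem y List.mem_cons_self).1 hu, hv, hxm⟩
      · -- y = w ++ c, x = c ++ S.flatten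
        refine ⟨[], w, by simp, Language.nil_mem_kstar L, hw, ?_⟩
        subst hx
        refine Language.append_mem_mul ?_ ?_
        · show w ++ c ∈ L
          rw [← hy]; exact (hmem y List.mem_cons_self).1
        · exact Language.join_mem_kstar (fun z hz => (hmem z (List.mem_cons_of_mem _ hz)).1)

lemma Quot'_kstar (L : Language α) (w : List α) (hw : w ≠ []) :
    Quot' (L∗) w =
      sSup ((fun A => A * L∗) ''
        (Quot' L '' {v | ∃ u, u ++ v = w ∧ u ∈ L∗ ∧ v ≠ []})) := by
  ext x
  simp only [mem_Quot', Set.sSup_eq_sUnion, Set.mem_sUnion, Set.mem_image,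
    Set.mem_setOf_eq]
  constructor
  · intro hx
    rcases Language.mem_kstar_iff_exists_nonempty.mp hx with ⟨S, hS, hmem⟩
    obtain ⟨u, v, huv, hu, hv, hxm⟩ := kstar_split L S w x hw hmem hS.symm
    exact ⟨Quot' L v * L∗, ⟨Quot' L v, ⟨v, ⟨u, huv, hu, hv⟩, rfl⟩, rfl⟩, hxm⟩
  · rintro ⟨_, ⟨_, ⟨v, ⟨u, rfl, hu, hv⟩, rfl⟩, rfl⟩, hx⟩
    rcases Language.mem_mul.mp hx with ⟨c, hc, d, hd, rfl⟩
    rcases Language.mem_kstar.mp hu with ⟨Su, rfl, hSu⟩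
    rcases Language.mem_kstar.mp hd with ⟨Sd, rfl, hSd⟩
    have : Su.flatten ++ v ++ (c ++ Sd.flatten)
        = (Su ++ [v ++ c] ++ Sd).flatten := by simp
    rw [this]
    exact Language.join_mem_kstar (by
      intro z hz
      simp only [List.mem_append, List.mem_singleton] at hz
      rcases hz with (hz | rfl) | hz
      · exact hSu z hz
      · exact hc
      · exact hSd z hz)

lemma finite_range_Quot' [DecidableEq α] (p : RegularExpression α) :
    (Set.range (Quot' p.matches')).Finite := by
  induction p with
  | zero =>
      apply Set.Finite.subset (Set.finite_singleton (0 : Language α))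
      rintro _ ⟨w, rfl⟩
      simp only [Set.mem_singleton_iff]
      ext x
      simp only [mem_Quot']
      exact iff_of_false (fun h => h) (fun h => h)
  | epsilon =>
      apply Set.Finite.subset ((Set.finite_singleton (1 : Language α)).insert 0)
      rintro _ ⟨w, rfl⟩
      cases w with
      | nil => exact Or.inr rfl
      | cons a w =>
          left
          ext x
          simp only [mem_Quot']
          constructor
          · intro h
            exact absurd (Language.mem_one _ |>.mp h) (by simp)
          · intro h
            exact absurd h (fun h => h)
  | char a =>
      apply Set.Finite.subset
        (((Set.finite_singleton ({[a]} : Language α)).insert 1).insert 0)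
      rintro _ ⟨w, rfl⟩
      have key : ∀ x : List α, x ∈ Quot' (char a).matches' w ↔ w ++ x = [a] :=
        fun x => Iff.rfl
      match w with
      | [] => exact Or.inr (Or.inr rfl)
      | [b] =>
          by_cases hba : b = a
          · subst hba
            refine Or.inr (Or.inl ?_)
            ext x
            rw [key x, Language.mem_one]
            simp
          · left
            ext x
            rw [key x]
            simp only [List.cons_append, List.nil_append, List.cons.injEq]
            exact iff_of_false (fun h => hba h.1) (fun h => h)
      | b :: c :: t =>
          left
          ext x
          rw [key x]
          exact iff_of_false (by simp) (fun h => h)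
  | plus P Q hP hQ =>
      apply Set.Finite.subset (Set.Finite.image2 (· + ·) hP hQ)
      rintro _ ⟨w, rfl⟩
      rw [show (P.plus Q).matches' = P.matches' + Q.matches' from rfl, Quot'_add]
      exact Set.mem_image2_of_mem ⟨w, rfl⟩ ⟨w, rfl⟩
  | comp P Q hP hQ =>
      apply Set.Finite.subset
        (Set.Finite.image2 (fun A T => A * Q.matches' + sSup T) hP hQ.finite_subsets)
      rintro _ ⟨w, rfl⟩
      rw [show (P.comp Q).matches' = P.matches' * Q.matches' from rfl, Quot'_mul]
      exact Set.mem_image2_of_mem ⟨w, rfl⟩ (Set.image_subset_range _ _)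
  | star P hP =>
      apply Set.Finite.subset
        (((hP.finite_subsets).image (fun T => sSup ((fun A => A * P.matches'∗) '' T))).insert
          (P.matches'∗))
      rintro _ ⟨w, rfl⟩
      cases w with
      | nil => exact Or.inl rfl
      | cons a w =>
          right
          refine ⟨Quot' P.matches' '' {v | ∃ u, u ++ v = a :: w ∧ u ∈ P.matches'∗ ∧ v ≠ []},
            Set.image_subset_range _ _, ?_⟩
          rw [show (P.star).matches' = P.matches'∗ from rfl,
            Quot'_kstar _ _ (List.cons_ne_nil a w)]

theorem finite_deriv_languages [DecidableEq α] (p : RegularExpression α) :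
    (Set.range fun w : List α => (derivs p w).matches').Finite := by
  have h : (fun w : List α => (derivs p w).matches') = Quot' p.matches' :=
    funext (derivs_matches' p)
  rw [h]
  exact finite_range_Quot' p
end

section
/- For all regular expressions p and q over an alphabet Σ, there exists a natural number k such that every string w over Σ of length k has two distinct prefixes s₁ and s₂, with s₁ a strict prefix of s₂, satisfying L(δ_{s₁} p) = L(δ_{s₂} p) and L(δ_{s₁} q) = L(δ_{s₂} q). -/
open RegularExpression

variable {α : Type*}

open Computability

/-! The languages `L(δ_s p)` are the left quotients `s⁻¹L(p)`, and a regular expression has only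
finitely many of them (Brzozowski): by induction on `p`, a quotient of `P * Q` is `s⁻¹P · Q` plus a
union of quotients of `Q`, and a quotient of `P∗` by a nonempty word is a union of languages
`v⁻¹P · P∗`. Hence the pairs `(s⁻¹L(p), s⁻¹L(q))` take at most `k` values, and among the `k + 1`
prefixes of a word of length `k` two must give the same pair. -/

namespace Language

variable {L M : Language α}

theorem mem_sSup {T : Set (Language α)} {x : List α} : x ∈ sSup T ↔ ∃ l ∈ T, x ∈ l := Iff.rfl

theorem mem_singleton {w x : List α} : x ∈ ({w} : Language α) ↔ x = w := Iff.rfl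

theorem leftQuotient_zero (x : List α) : (0 : Language α).leftQuotient x = 0 := rfl

theorem range_leftQuotient_one_subset :
    Set.range (1 : Language α).leftQuotient ⊆ {1, 0} := by
  rintro _ ⟨x | ⟨b, x⟩, rfl⟩
  · exact .inl rfl
  · refine .inr (Language.ext fun y => ?_)
    simp [mem_one, notMem_zero]

theorem range_leftQuotient_char_subset (a : α) :
    Set.range ({[a]} : Language α).leftQuotient ⊆ {{[a]}, 1, 0} := by
  rintro _ ⟨x, rfl⟩
  match x with
  | [] => exact .inl rfl
  | [b] =>
    by_cases hb : b = a
    · refine .inr (.inl (Language.ext fun y => ?_))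
      simp [mem_singleton, mem_one, hb]
    · refine .inr (.inr (Language.ext fun y => ?_))
      simp [mem_singleton, notMem_zero, hb]
  | b :: c :: x =>
    refine .inr (.inr (Language.ext fun y => ?_))
    simp [mem_singleton, notMem_zero]

theorem leftQuotient_mul (x : List α) :
    (L * M).leftQuotient x = L.leftQuotient x * M +
      sSup {N | ∃ u v, u ++ v = x ∧ u ∈ L ∧ N = M.leftQuotient v} := by
  refine Language.ext fun s => ?_
  simp only [mem_add, mem_leftQuotient, mem_mul, mem_sSup]
  constructor
  · rintro ⟨u, hu, t, ht, hut⟩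
    rcases List.append_eq_append_iff.1 hut with ⟨v, rfl, rfl⟩ | ⟨y, rfl, rfl⟩
    · exact .inr ⟨M.leftQuotient v, ⟨u, v, rfl, hu, rfl⟩, ht⟩
    · exact .inl ⟨y, hu, t, ht, rfl⟩
  · rintro (⟨y, hy, t, ht, rfl⟩ | ⟨_, ⟨u, v, rfl, hu, rfl⟩, hs⟩)
    · exact ⟨x ++ y, hy, t, ht, by simp⟩
    · exact ⟨u, hu, v ++ s, hs, by simp⟩

theorem leftQuotient_kstar {x : List α} (hx : x ≠ []) :
    (L∗).leftQuotient x = sSup {N | ∃ u v, u ++ v = x ∧ u ∈ L∗ ∧ N = L.leftQuotient v * L∗} := by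
  refine Language.ext fun s => ?_
  simp only [mem_leftQuotient, mem_sSup]
  constructor
  · rw [mem_kstar]
    rintro ⟨S, hS, hSL⟩
    rcases List.append_eq_flatten_iff.1 hS with
      ⟨B, C, rfl, rfl, rfl⟩ | ⟨B, v, c, cs, C, rfl, rfl, rfl⟩
    · obtain rfl | ⟨B, v, rfl⟩ := B.eq_nil_or_concat
      · exact absurd rfl hx
      refine ⟨_, ⟨B.flatten, v, by simp, join_mem_kstar fun y hy => hSL y (by simp [hy]), rfl⟩,
        mem_mul.2 ⟨[], by simpa using hSL v (by simp), C.flatten,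
          join_mem_kstar fun y hy => hSL y (by simp [hy]), by simp⟩⟩
    · exact ⟨_, ⟨B.flatten, v, rfl, join_mem_kstar fun y hy => hSL y (by simp [hy]), rfl⟩,
        mem_mul.2 ⟨c :: cs, hSL (v ++ c :: cs) (by simp), C.flatten,
          join_mem_kstar fun y hy => hSL y (by simp [hy]), by simp⟩⟩
  · rintro ⟨_, ⟨u, v, rfl, hu, rfl⟩, t, ht, r, hr, rfl⟩
    obtain ⟨S, rfl, hS⟩ := mem_kstar.1 hu
    obtain ⟨R, rfl, hR⟩ := mem_kstar.1 hr
    refine mem_kstar.2 ⟨S ++ (v ++ t) :: R, by simp, fun y hy => ?_⟩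
    simp only [List.mem_append, List.mem_cons] at hy
    rcases hy with hy | rfl | hy
    exacts [hS y hy, ht, hR y hy]

end Language

namespace RegularExpression

open Language

theorem finite_range_leftQuotient_matches' (p : RegularExpression α) :
    (Set.range p.matches'.leftQuotient).Finite := by
  induction p with
  | zero => exact (Set.finite_singleton 0).subset (Set.range_subset_iff.2 leftQuotient_zero)
  | epsilon => exact (Set.toFinite _).subset range_leftQuotient_one_subset
  | char a => exact (Set.toFinite _).subset (range_leftQuotient_char_subset a)
  | plus p q hp hq =>
    refine (hp.image2 (· + ·) hq).subset ?_
    rintro _ ⟨x, rfl⟩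
    exact Set.mem_image2_of_mem ⟨x, rfl⟩ ⟨x, rfl⟩
  | comp p q hp hq =>
    refine (hp.image2 (fun l T => l * q.matches' + sSup T) hq.finite_subsets).subset ?_
    rintro _ ⟨x, rfl⟩
    refine ⟨_, ⟨x, rfl⟩, _, ?_, (leftQuotient_mul x).symm⟩
    rintro _ ⟨u, v, -, -, rfl⟩
    exact ⟨v, rfl⟩
  | star p hp =>
    refine ((((hp.image (· * p.matches'∗)).finite_subsets).image sSup).insert
      (p.matches'∗)).subset ?_
    rintro _ ⟨_ | ⟨a, x⟩, rfl⟩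
    · exact .inl rfl
    refine .inr ⟨_, ?_, (leftQuotient_kstar (List.cons_ne_nil a x)).symm⟩
    rintro _ ⟨u, v, -, -, rfl⟩
    exact ⟨_, ⟨v, rfl⟩, rfl⟩

theorem rmatch_derivs [DecidableEq α] (p : RegularExpression α) (w s : List α) :
    (derivs p w).rmatch s = p.rmatch (w ++ s) := by
  induction w generalizing p with
  | nil => rfl
  | cons a w ih => exact ih (p.deriv a)

theorem matches'_derivs [DecidableEq α] (p : RegularExpression α) (w : List α) :
    (derivs p w).matches' = p.matches'.leftQuotient w :=
  Language.ext fun s => by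
    rw [Language.mem_leftQuotient, ← rmatch_iff_matches', ← rmatch_iff_matches', rmatch_derivs]

end RegularExpression

theorem exists_length_forall_exists_prefix_map_eq {β : Type*} {f : List α → β}
    (hf : (Set.range f).Finite) :
    ∃ k : ℕ, ∀ w : List α, w.length = k →
      ∃ s₁ s₂ : List α, s₁ <+: s₂ ∧ s₁ ≠ s₂ ∧ s₂ <+: w ∧ f s₁ = f s₂ := by
  refine ⟨hf.toFinset.card, fun w hw => ?_⟩
  have hmaps : ∀ i ∈ Finset.range (hf.toFinset.card + 1), f (w.take i) ∈ hf.toFinset :=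
    fun i _ => hf.mem_toFinset.2 ⟨_, rfl⟩
  obtain ⟨i, hi, j, hj, hij, hfij⟩ :=
    Finset.exists_ne_map_eq_of_card_lt_of_maps_to (by simp) hmaps
  wlog hlt : i < j generalizing i j
  · exact this j hj i hi hij.symm hfij.symm (hij.symm.lt_of_le (not_lt.1 hlt))
  have hjw : j ≤ w.length := hw ▸ Nat.lt_succ_iff.1 (Finset.mem_range.1 hj)
  refine ⟨w.take i, w.take j, List.take_prefix_take_left hlt.le, fun h => hlt.ne ?_,
    List.take_prefix j w, hfij⟩
  simpa [hjw, (hlt.trans_le hjw).le] using congrArg List.length h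

theorem exists_length_with_repeating_prefixes [DecidableEq α] (p q : RegularExpression α) :
    ∃ k : ℕ, ∀ w : List α, w.length = k →
      ∃ s₁ s₂ : List α, s₁ <+: s₂ ∧ s₁ ≠ s₂ ∧ s₂ <+: w ∧
        (derivs p s₁).matches' = (derivs p s₂).matches' ∧
        (derivs q s₁).matches' = (derivs q s₂).matches' := by
  have hfin : (Set.range fun s => (p.matches'.leftQuotient s, q.matches'.leftQuotient s)).Finite :=
    (p.finite_range_leftQuotient_matches'.prod q.finite_range_leftQuotient_matches').subset
      (Set.range_subset_iff.2 fun s => ⟨⟨s, rfl⟩, ⟨s, rfl⟩⟩)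
  obtain ⟨k, hk⟩ := exists_length_forall_exists_prefix_map_eq hfin
  refine ⟨k, fun w hw => ?_⟩
  obtain ⟨s₁, s₂, h₁₂, hne, h₂w, heq⟩ := hk w hw
  simp only [RegularExpression.matches'_derivs]
  exact ⟨s₁, s₂, h₁₂, hne, h₂w, Prod.ext_iff.1 heq⟩
end
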